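/- If w·p ≤ v where w, v are positive naturals and 0 ≤ p ≤ 1, then for all i with v ≤ i ≤ w, C(w,i)·p^i·(1−p)^{w−i} ≤ C(w,v)·p^v·(1−p)^{w−v}. -/
import Mathlib


/-- Monotonicity of binomial probabilities beyond the mean: if `w·p ≤ v` with
`p ∈ [0,1]`, then for all `i` with `v ≤ i ≤ w`,
`C(w,i)·p^i·(1-p)^{w-i} ≤ C(w,v)·p^v·(1-p)^{w-v}`. -/
theorem stmt_9 (w v : ℕ) (hw : 0 < w) (hv : 0 < v) (p : ℝ)
    (hp0 : 0 ≤ p) (hp1 : p ≤ 1) (hmean : (w : ℝ) * p ≤ (v : ℝ)) :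
    ∀ i : ℕ, v ≤ i → i ≤ w →
      (w.choose i : ℝ) * p ^ i * (1 - p) ^ (w - i)
        ≤ (w.choose v : ℝ) * p ^ v * (1 - p) ^ (w - v) := by
  intro i hvi
  induction i, hvi using Nat.le_induction with
  | base => intro _; exact le_rfl
  | succ i hi ih =>
    intro hiw
    have hiw' : i ≤ w := by omega
    refine le_trans ?_ (ih hiw')
    -- step: f(i+1) ≤ f(i)
    have hq : (0:ℝ) ≤ 1 - p := by linarith
    have hC0 : (0:ℝ) ≤ (w.choose i : ℝ) := by positivity
    have hvi' : (i:ℝ) ≥ (v:ℝ) := by exact_mod_cast hi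
    have hstep : ((w:ℝ) - i) * p ≤ ((i:ℝ)+1) * (1-p) := by nlinarith
    have h1 : (w.choose (i+1) : ℝ) * ((i:ℝ)+1) = (w.choose i : ℝ) * ((w:ℝ) - i) := by
      have := Nat.choose_succ_right_eq w i
      have hcast : ((w.choose (i+1) * (i+1) : ℕ) : ℝ) = ((w.choose i * (w - i) : ℕ) : ℝ) := by
        exact_mod_cast congrArg (Nat.cast (R := ℝ)) this
      push_cast [Nat.cast_sub hiw'] at hcast
      linarith
    have hm : w - i = (w - (i+1)) + 1 := by omega
    rw [hm, pow_succ]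
    set m := w - (i+1) with hmdef
    have hqm : (0:ℝ) ≤ (1-p)^m := pow_nonneg hq m
    have hpi : (0:ℝ) ≤ p^i := pow_nonneg hp0 i
    have hmul := mul_le_mul_of_nonneg_left hstep (mul_nonneg (mul_nonneg hC0 hpi) hqm)
    have hpos : (0:ℝ) < (i:ℝ) + 1 := by positivity
    have hL : (w.choose (i+1) : ℝ) * p ^ (i+1) * (1-p)^m * ((i:ℝ)+1)
        = (w.choose i : ℝ) * p^i * (1-p)^m * (((w:ℝ) - i) * p) := by
      rw [pow_succ]; linear_combination (p^i * p * (1-p)^m) * h1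
    have hR : (w.choose i : ℝ) * p^i * (1-p)^m * (((i:ℝ)+1) * (1-p))
        = (w.choose i : ℝ) * p^i * ((1-p)^m * (1-p)) * ((i:ℝ)+1) := by ring
    have : (w.choose (i+1) : ℝ) * p ^ (i+1) * (1-p)^m * ((i:ℝ)+1)
        ≤ (w.choose i : ℝ) * p^i * ((1-p)^m * (1-p)) * ((i:ℝ)+1) := by
      rw [hL, ← hR]; exact hmul
    exact le_of_mul_le_mul_right this hpos
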